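/- arXiv:2010.06562 — 2 statements merged into one kernel-verified Lean document; each statement's English description precedes it below -/
import Mathlib

section
/- Let W be an ε-LDP channel from X to Y with densities W(y|x) with respect to μ, and P a distribution on X. Then ∫_Y Var_{P}[W(y|X)] / E_{P}[W(y|X)] dμ(y) ≤ min((e^ε − 1)^2, e^ε). -/
/-!
For fixed `y`, the values of `f = W(y|·)` lie within a factor `e^ε` of each other, so with
`m = E_P f` they lie in `[m / e^ε, e^ε m]` and in `[0, e^ε f x₀]` for any fixed `x₀`.
The Bhatia–Davis inequality on these two intervals gives
`Var f ≤ (e^ε - 1)² m f x₀` and `Var f ≤ e^ε m f x₀`. Dividing by `m` and integrating over `y`,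
using `∫ W(y|x₀) dμ(y) = 1`, gives the bound.
-/

open MeasureTheory ProbabilityTheory

section RatioBounded

variable {Ω : Type*} [MeasurableSpace Ω] {P : Measure Ω} [IsProbabilityMeasure P]
  {f : Ω → ℝ} {c : ℝ}

lemma integral_le_mul_of_forall_le_mul (hf : Integrable f P)
    (h : ∀ x₁ x₂, f x₁ ≤ c * f x₂) (x : Ω) : ∫ x', f x' ∂P ≤ c * f x :=
  calc ∫ x', f x' ∂P ≤ ∫ _, c * f x ∂P := integral_mono hf (integrable_const _) fun x' => h x' x
    _ = c * f x := by simp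

lemma le_mul_integral_of_forall_le_mul (hf : Integrable f P)
    (h : ∀ x₁ x₂, f x₁ ≤ c * f x₂) (x : Ω) : f x ≤ c * ∫ x', f x' ∂P :=
  calc f x = ∫ _, f x ∂P := by simp
    _ ≤ ∫ x', c * f x' ∂P := integral_mono (integrable_const _) (hf.const_mul c) (h x)
    _ = c * ∫ x', f x' ∂P := integral_const_mul c f

lemma variance_le_sq_sub_one_mul_of_forall_le_mul (hf0 : ∀ x, 0 ≤ f x) (hf : Integrable f P)
    (hc : 0 < c) (h : ∀ x₁ x₂, f x₁ ≤ c * f x₂) (x₀ : Ω) :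
    variance f P ≤ (c - 1) ^ 2 * ((∫ x, f x ∂P) * f x₀) := by
  set m := ∫ x, f x ∂P
  have hm : 0 ≤ m := integral_nonneg hf0
  have hlower : ∀ x, m / c ≤ f x := fun x =>
    (div_le_iff₀' hc).2 (integral_le_mul_of_forall_le_mul hf h x)
  have hIcc : ∀ᵐ x ∂P, f x ∈ Set.Icc (m / c) (c * m) :=
    ae_of_all _ fun x => ⟨hlower x, le_mul_integral_of_forall_le_mul hf h x⟩
  calc variance f P ≤ (c * m - m) * (m - m / c) := variance_le_sub_mul_sub hIcc hf.aemeasurable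
    _ = (c - 1) ^ 2 * (m * (m / c)) := by field_simp
    _ ≤ (c - 1) ^ 2 * (m * f x₀) := by gcongr; exact hlower x₀

lemma variance_le_mul_of_forall_le_mul (hf0 : ∀ x, 0 ≤ f x) (hf : Integrable f P)
    (h : ∀ x₁ x₂, f x₁ ≤ c * f x₂) (x₀ : Ω) :
    variance f P ≤ c * ((∫ x, f x ∂P) * f x₀) := by
  set m := ∫ x, f x ∂P
  have hIcc : ∀ᵐ x ∂P, f x ∈ Set.Icc 0 (c * f x₀) :=
    ae_of_all _ fun x => ⟨hf0 x, h x x₀⟩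
  calc variance f P ≤ (c * f x₀ - m) * (m - 0) := variance_le_sub_mul_sub hIcc hf.aemeasurable
    _ ≤ c * (m * f x₀) := by nlinarith [sq_nonneg m]

lemma variance_div_integral_le_of_forall_le_mul (hf0 : ∀ x, 0 ≤ f x) (hf : Integrable f P)
    (h : ∀ x₁ x₂, f x₁ ≤ c * f x₂) (x₀ : Ω) :
    variance f P / (∫ x, f x ∂P) ≤ min ((c - 1) ^ 2) c * f x₀ := by
  rcases (integral_nonneg hf0 : 0 ≤ ∫ x, f x ∂P).eq_or_lt with hm | hm
  · -- both sides vanish: the left by `x / 0 = 0`, the right since `f ≤ c * E f = 0`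
    have hx₀ : f x₀ = 0 :=
      le_antisymm (by simpa [← hm] using le_mul_integral_of_forall_le_mul hf h x₀) (hf0 x₀)
    simp [← hm, hx₀]
  · have hc : 0 < c :=
      pos_of_mul_pos_left (hm.trans_le (integral_le_mul_of_forall_le_mul hf h x₀)) (hf0 x₀)
    rw [div_le_iff₀ hm, mul_assoc, mul_comm (f x₀),
      min_mul_of_nonneg _ _ (mul_nonneg hm.le (hf0 x₀))]
    exact le_min (variance_le_sq_sub_one_mul_of_forall_le_mul hf0 hf hc h x₀)
      (variance_le_mul_of_forall_le_mul hf0 hf h x₀)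

end RatioBounded

theorem stmt_3_general {X Y : Type*} [MeasurableSpace X] [MeasurableSpace Y]
    (W : Y → X → ℝ) (ε : ℝ) (μ : Measure Y) (P : Measure X) [IsProbabilityMeasure P]
    (hW_nonneg : ∀ y x, 0 ≤ W y x)
    (hW_int : ∀ y, MemLp (W y) 2 P)
    (hW_dens : ∀ x, ∫ y, W y x ∂μ = 1)
    (hLDP : ∀ y x₁ x₂, W y x₁ ≤ Real.exp ε * W y x₂) :
    ∫ y, variance (W y) P / (∫ x, W y x ∂P) ∂μ ≤
      min ((Real.exp ε - 1) ^ 2) (Real.exp ε) := by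
  obtain ⟨x₀⟩ := nonempty_of_isProbabilityMeasure P
  have hint : Integrable (fun y => W y x₀) μ :=
    Integrable.of_integral_ne_zero (by rw [hW_dens]; exact one_ne_zero)
  calc ∫ y, variance (W y) P / (∫ x, W y x ∂P) ∂μ
      ≤ ∫ y, min ((Real.exp ε - 1) ^ 2) (Real.exp ε) * W y x₀ ∂μ :=
        integral_mono_of_nonneg
          (ae_of_all _ fun y => div_nonneg (variance_nonneg _ _) (integral_nonneg (hW_nonneg y)))
          (hint.const_mul _)
          (ae_of_all _ fun y => variance_div_integral_le_of_forall_le_mul (hW_nonneg y)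
            ((hW_int y).integrable one_le_two) (hLDP y) x₀)
    _ = min ((Real.exp ε - 1) ^ 2) (Real.exp ε) := by rw [integral_const_mul, hW_dens, mul_one]

/-- Corollary for LDP constraints: the integrated variance-to-mean ratio of the channel
densities is at most `min ((e^ε - 1)^2) (e^ε)`. -/
theorem stmt_3 {X Y : Type*} [MeasurableSpace X] [MeasurableSpace Y]
    (W : Y → X → ℝ) (ε : ℝ) (μ : Measure Y) (P : Measure X) [IsProbabilityMeasure P]
    (hW_nonneg : ∀ y x, 0 ≤ W y x)
    (hW_meas : Measurable (Function.uncurry W))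
    (hW_int : ∀ y, MemLp (W y) 2 P)
    (hW_dens : ∀ x, ∫ y, W y x ∂μ = 1)
    (hLDP : ∀ y x₁ x₂, W y x₁ ≤ Real.exp ε * W y x₂) :
    ∫ y, variance (W y) P / (∫ x, W y x ∂P) ∂μ ≤
      min ((Real.exp ε - 1) ^ 2) (Real.exp ε) :=
  stmt_3_general W ε μ P hW_nonneg hW_int hW_dens hLDP
end

section
/- Let X ∼ N(μ, I_d) be a d-dimensional Gaussian with mean μ ∈ [−1,1]^d, and let ν ∈ ℝ^d be defined by ν_i = 2·P(X_i > 0) − 1 = Erf(μ_i/√2). For any estimate ν̂ ∈ [−η, η]^d (with η = Erf(1/√2)), define μ̂_i = √2·Erf⁻¹(ν̂_i). Then for every p ∈ [1,∞), ‖μ − μ̂‖_p ≤ √(eπ/2)·‖ν − ν̂‖_p. -/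
/-
`Erf` is strictly increasing and odd, with `Erf' x = (2/√π) e^{-x²}`, which on `[-r, r]` is at
least `(2/√π) e^{-r²}`. By the mean value theorem `Erf` therefore expands distances on `[-r, r]` by
at least that factor, so its inverse is Lipschitz on `Erf([-r, r])`. With `r = 1/√2` and the scaling
`μ = √2 · Erf⁻¹ ν` this gives `|μ_i - μ̂_i| ≤ √(eπ/2) |ν_i - ν̂_i|` in each coordinate (`|μ̂_i| ≤ 1`
because `Erf` is monotone and odd), and such a coordinatewise bound passes to every `ℓ_p` sum.
-/
open MeasureTheory intervalIntegral

noncomputable def erf (x : ℝ) : ℝ :=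
  (2 / Real.sqrt Real.pi) * ∫ t in (0 : ℝ)..x, Real.exp (-t ^ 2)

open Real

lemma hasDerivAt_erf (x : ℝ) : HasDerivAt erf (2 / √π * exp (-x ^ 2)) x := by
  have hcont : Continuous fun t : ℝ => exp (-t ^ 2) := by fun_prop
  exact (integral_hasDerivAt_right (hcont.intervalIntegrable _ _)
    hcont.aestronglyMeasurable.stronglyMeasurableAtFilter hcont.continuousAt).const_mul _

lemma differentiable_erf : Differentiable ℝ erf := fun x => (hasDerivAt_erf x).differentiableAt

lemma deriv_erf (x : ℝ) : deriv erf x = 2 / √π * exp (-x ^ 2) := (hasDerivAt_erf x).deriv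

lemma erf_strictMono : StrictMono erf :=
  strictMono_of_deriv_pos fun x => by rw [deriv_erf]; positivity

lemma erf_neg (x : ℝ) : erf (-x) = -erf x := by
  have h := integral_comp_neg (a := 0) (b := x) fun t => exp (-t ^ 2)
  simp only [even_two, Even.neg_pow, neg_zero] at h
  rw [erf, erf, integral_symm, ← h, mul_neg]

lemma abs_le_of_abs_erf_le {x r : ℝ} (h : |erf x| ≤ erf r) : |x| ≤ r := by
  rw [abs_le, ← erf_neg] at *
  exact ⟨erf_strictMono.le_iff_le.1 h.1, erf_strictMono.le_iff_le.1 h.2⟩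

lemma mul_abs_sub_le_abs_erf_sub {r x y : ℝ} (hx : |x| ≤ r) (hy : |y| ≤ r) :
    2 / √π * exp (-r ^ 2) * |x - y| ≤ |erf x - erf y| := by
  wlog hxy : x ≤ y generalizing x y
  · simpa only [abs_sub_comm] using this hy hx (le_of_not_ge hxy)
  have growth := (convex_Icc (-r) r).mul_sub_le_image_sub_of_le_deriv
    differentiable_erf.continuous.continuousOn differentiable_erf.differentiableOn
    (C := 2 / √π * exp (-r ^ 2)) (fun t ht => ?_) x (abs_le.1 hx) y (abs_le.1 hy) hxy
  · rwa [abs_sub_comm, abs_of_nonneg (sub_nonneg.2 hxy), abs_sub_comm,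
      abs_of_nonneg (sub_nonneg.2 (erf_strictMono.monotone hxy))]
  · rw [interior_Icc] at ht
    rw [deriv_erf]
    gcongr 2 / √π * exp ?_
    exact neg_le_neg (sq_le_sq' ht.1.le ht.2.le)

lemma abs_sub_le_mul_abs_erf_sub {a b : ℝ} (ha : |a| ≤ 1) (hb : |b| ≤ 1) :
    |a - b| ≤ √(exp 1 * π / 2) * |erf (a / √2) - erf (b / √2)| := by
  have hs : 0 < √2 := by positivity
  have h := mul_abs_sub_le_abs_erf_sub (r := 1 / √2) (x := a / √2) (y := b / √2)
    (by rw [abs_div, abs_of_pos hs]; gcongr) (by rw [abs_div, abs_of_pos hs]; gcongr)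
  rw [div_sub_div_same, abs_div, abs_of_pos hs, div_pow, one_pow, sq_sqrt zero_le_two] at h
  have hconst : √(exp 1 * π / 2) * (2 / √π * exp (-(1 / 2))) = √2 := by
    have he : exp (-(1 / 2)) ^ 2 * exp 1 = 1 := by
      rw [sq, ← exp_add, ← exp_add]; norm_num
    rw [← sqrt_sq (by positivity : 0 ≤ √(exp 1 * π / 2) * (2 / √π * exp (-(1 / 2))))]
    congr 1
    rw [mul_pow, mul_pow, div_pow, sq_sqrt (by positivity), sq_sqrt pi_pos.le]
    field_simp
    linear_combination he
  calc |a - b| = √(exp 1 * π / 2) * (2 / √π * exp (-(1 / 2))) * (|a - b| / √2) := by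
        rw [hconst, mul_div_cancel₀ _ hs.ne']
    _ ≤ _ := by rw [mul_assoc]; gcongr

lemma rpow_sum_rpow_le_mul {ι : Type*} (s : Finset ι) {f g : ι → ℝ} {C p : ℝ} (hp : 0 < p)
    (hC : 0 ≤ C) (hf : ∀ i ∈ s, 0 ≤ f i) (hg : ∀ i ∈ s, 0 ≤ g i)
    (hfg : ∀ i ∈ s, f i ≤ C * g i) :
    (∑ i ∈ s, f i ^ p) ^ (1 / p) ≤ C * (∑ i ∈ s, g i ^ p) ^ (1 / p) := by
  calc (∑ i ∈ s, f i ^ p) ^ (1 / p) ≤ (∑ i ∈ s, (C * g i) ^ p) ^ (1 / p) := by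
        gcongr with i hi
        · exact Finset.sum_nonneg fun i hi => rpow_nonneg (hf i hi) p
        · exact hf i hi
        · exact hfg i hi
    _ = (C ^ p * ∑ i ∈ s, g i ^ p) ^ (1 / p) := by
        rw [Finset.mul_sum]
        congr 1
        exact Finset.sum_congr rfl fun i hi => mul_rpow hC (hg i hi)
    _ = C * (∑ i ∈ s, g i ^ p) ^ (1 / p) := by
        rw [mul_rpow (by positivity) (Finset.sum_nonneg fun i hi => rpow_nonneg (hg i hi) p),
          ← rpow_mul hC, mul_one_div_cancel hp.ne', rpow_one]

/-- Reduction from Gaussian to Bernoulli mean estimation: if `ν i = Erf(μ i / √2)`,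
`ν̂ ∈ [-η, η]^d` with `η = Erf(1/√2)`, and `μ̂ i = √2 Erf⁻¹(ν̂ i)` (expressed by
`erf (μ̂ i / √2) = ν̂ i`), then `‖μ - μ̂‖_p ≤ √(eπ/2) ‖ν - ν̂‖_p`. -/
theorem stmt_14 (d : ℕ) (p : ℝ) (hp : 1 ≤ p)
    (μ ν νhat μhat : Fin d → ℝ)
    (hμ : ∀ i, |μ i| ≤ 1)
    (hν : ∀ i, ν i = erf (μ i / Real.sqrt 2))
    (hνhat : ∀ i, |νhat i| ≤ erf (1 / Real.sqrt 2))
    (hμhat : ∀ i, erf (μhat i / Real.sqrt 2) = νhat i) :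
    (∑ i, |μ i - μhat i| ^ p) ^ (1 / p) ≤
      Real.sqrt (Real.exp 1 * Real.pi / 2) * (∑ i, |ν i - νhat i| ^ p) ^ (1 / p) := by
  have hμhat_le (i : Fin d) : |μhat i| ≤ 1 := by
    have h := abs_le_of_abs_erf_le ((hμhat i).symm ▸ hνhat i)
    have hs : 0 < √2 := by positivity
    rwa [abs_div, abs_of_pos hs, div_le_div_iff_of_pos_right hs] at h
  refine rpow_sum_rpow_le_mul _ (by linarith) (sqrt_nonneg _) (fun _ _ => abs_nonneg _)
    (fun _ _ => abs_nonneg _) fun i _ => ?_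
  rw [hν i, ← hμhat i]
  exact abs_sub_le_mul_abs_erf_sub (hμ i) (hμhat_le i)
end
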